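/- arXiv:2310.15846 — 3 statements merged into one kernel-verified Lean document; each statement's English description precedes it below -/
import Mathlib

section
/- Let g1 and g2 be unit vectors in R^3 with angle θ ∈ [0, π) between them, and let P_i = I - g_i g_i^T for i = 1,2. Then the smallest eigenvalue of P_1 + P_2 equals 1 - |cos θ|. -/
/-!
For a vector `x`, the quadratic form of `P₁ + P₂` is `2 ‖x‖² - (g₁ ⬝ x)² - (g₂ ⬝ x)²`. Cauchy–Schwarz
applied to `x` and `y = (g₁ ⬝ x) g₁ + (g₂ ⬝ x) g₂`, whose squared norm is at most
`(1 + |cos θ|) (x ⬝ y)`, gives `(g₁ ⬝ x)² + (g₂ ⬝ x)² ≤ (1 + |cos θ|) ‖x‖²`, so every eigenvalue is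
at least `1 - |cos θ|`. The bound is attained: `g₁ ± g₂`, with the sign of `cos θ`, is an
eigenvector for the eigenvalue `1 - |cos θ|`.
-/

open Matrix Real

namespace Matrix.IsHermitian

variable {n : Type*} [Fintype n] [DecidableEq n] {A : Matrix n n ℝ}

theorem le_eigenvalues_of_forall_le_dotProduct_mulVec (hA : A.IsHermitian) {μ : ℝ}
    (h : ∀ x, μ * (x ⬝ᵥ x) ≤ x ⬝ᵥ A *ᵥ x) (i : n) : μ ≤ hA.eigenvalues i := by
  have hv : (hA.eigenvectorBasis i : n → ℝ) ⬝ᵥ hA.eigenvectorBasis i = 1 := by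
    have h := real_inner_self_eq_norm_sq (hA.eigenvectorBasis i)
    rw [hA.eigenvectorBasis.orthonormal.1 i, EuclideanSpace.inner_eq_star_dotProduct] at h
    simpa using h
  simpa [hv, mulVec_eigenvectorBasis] using h (hA.eigenvectorBasis i)

theorem exists_eigenvalues_eq_of_mulVec_eq_smul (hA : A.IsHermitian) {μ : ℝ} {v : n → ℝ}
    (hv : v ≠ 0) (hAv : A *ᵥ v = μ • v) : ∃ i, hA.eigenvalues i = μ := by
  have hμ : Module.End.HasEigenvalue (toLin' A) μ :=
    Module.End.hasEigenvalue_of_hasEigenvector <| Module.End.hasEigenvector_iff.mpr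
      ⟨Module.End.mem_eigenspace_iff.mpr (by simpa using hAv), hv⟩
  simpa [hA.spectrum_real_eq_range_eigenvalues] using hμ.mem_spectrum

theorem iInf_eigenvalues_eq (hA : A.IsHermitian) {μ : ℝ}
    (h : ∀ x, μ * (x ⬝ᵥ x) ≤ x ⬝ᵥ A *ᵥ x) {v : n → ℝ} (hv : v ≠ 0) (hAv : A *ᵥ v = μ • v) :
    ⨅ i, hA.eigenvalues i = μ := by
  obtain ⟨i, hi⟩ := hA.exists_eigenvalues_eq_of_mulVec_eq_smul hv hAv
  have : Nonempty n := ⟨i⟩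
  exact le_antisymm (hi ▸ ciInf_le (Set.finite_range _).bddBelow i)
    (le_ciInf (hA.le_eigenvalues_of_forall_le_dotProduct_mulVec h))

end Matrix.IsHermitian

section DotProduct

variable {n : Type*} [Fintype n]

theorem sq_dotProduct_le_dotProduct_self_mul {R : Type*} [CommRing R] [LinearOrder R]
    [IsStrictOrderedRing R] (x y : n → R) : (x ⬝ᵥ y) ^ 2 ≤ (x ⬝ᵥ x) * (y ⬝ᵥ y) := by
  simpa only [dotProduct, sq] using Finset.sum_mul_sq_le_sq_mul_sq Finset.univ x y

theorem one_sub_vecMulVec_self_mulVec {R : Type*} [CommRing R] [DecidableEq n] (g x : n → R) :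
    (1 - vecMulVec g g) *ᵥ x = x - (g ⬝ᵥ x) • g := by
  rw [sub_mulVec, one_mulVec, vecMulVec_mulVec, op_smul_eq_smul]

theorem dotProduct_one_sub_vecMulVec_self_mulVec {R : Type*} [CommRing R] [DecidableEq n]
    (g x : n → R) : x ⬝ᵥ (1 - vecMulVec g g) *ᵥ x = x ⬝ᵥ x - (g ⬝ᵥ x) ^ 2 := by
  rw [one_sub_vecMulVec_self_mulVec, dotProduct_sub, dotProduct_smul, smul_eq_mul,
    dotProduct_comm x g, sq]

theorem sq_dotProduct_add_sq_dotProduct_le {g₁ g₂ : n → ℝ} (hg₁ : g₁ ⬝ᵥ g₁ = 1)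
    (hg₂ : g₂ ⬝ᵥ g₂ = 1) (x : n → ℝ) :
    (g₁ ⬝ᵥ x) ^ 2 + (g₂ ⬝ᵥ x) ^ 2 ≤ (1 + |g₁ ⬝ᵥ g₂|) * (x ⬝ᵥ x) := by
  set a := g₁ ⬝ᵥ x
  set b := g₂ ⬝ᵥ x
  set c := g₁ ⬝ᵥ g₂
  set y := a • g₁ + b • g₂
  have hyx : y ⬝ᵥ x = a ^ 2 + b ^ 2 := by
    simp only [y, add_dotProduct, smul_dotProduct, smul_eq_mul, a, b, sq]
  have hyy : y ⬝ᵥ y = a ^ 2 + b ^ 2 + 2 * a * b * c := by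
    simp only [y, dotProduct_add, add_dotProduct, dotProduct_smul, smul_dotProduct, smul_eq_mul,
      hg₁, hg₂, dotProduct_comm g₂ g₁, c]
    ring
  have hcross : 2 * a * b * c ≤ |c| * (a ^ 2 + b ^ 2) := by
    have := two_mul_le_add_sq |a| |b|
    nlinarith [le_abs_self (a * b * c), abs_mul (a * b) c, abs_mul a b, abs_nonneg c,
      sq_abs a, sq_abs b]
  have hCS := sq_dotProduct_le_dotProduct_self_mul y x
  rw [hyx, hyy] at hCS
  have hxx : 0 ≤ x ⬝ᵥ x := Fintype.sum_nonneg fun i => mul_self_nonneg (x i)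
  have hq : (a ^ 2 + b ^ 2) * (a ^ 2 + b ^ 2) ≤ (1 + |c|) * (x ⬝ᵥ x) * (a ^ 2 + b ^ 2) := by
    nlinarith [mul_le_mul_of_nonneg_right hcross hxx]
  by_contra! h
  have hpos : 0 < a ^ 2 + b ^ 2 := lt_of_le_of_lt (by positivity) h
  exact (mul_lt_mul_of_pos_right h hpos).not_ge hq

end DotProduct

section ProjSum

variable {n : Type*} [Fintype n] [DecidableEq n]

def projSum (g₁ g₂ : n → ℝ) : Matrix n n ℝ := (1 - vecMulVec g₁ g₁) + (1 - vecMulVec g₂ g₂)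

variable {g₁ g₂ : n → ℝ}

theorem one_sub_abs_mul_le_dotProduct_projSum_mulVec (hg₁ : g₁ ⬝ᵥ g₁ = 1)
    (hg₂ : g₂ ⬝ᵥ g₂ = 1) (x : n → ℝ) :
    (1 - |g₁ ⬝ᵥ g₂|) * (x ⬝ᵥ x) ≤ x ⬝ᵥ projSum g₁ g₂ *ᵥ x := by
  rw [projSum, add_mulVec, dotProduct_add, dotProduct_one_sub_vecMulVec_self_mulVec,
    dotProduct_one_sub_vecMulVec_self_mulVec]
  linarith [sq_dotProduct_add_sq_dotProduct_le hg₁ hg₂ x]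

theorem projSum_mulVec_add_smul (hg₁ : g₁ ⬝ᵥ g₁ = 1) (hg₂ : g₂ ⬝ᵥ g₂ = 1) {ε : ℝ}
    (hε : ε ^ 2 = 1) :
    projSum g₁ g₂ *ᵥ (g₁ + ε • g₂) = (1 - ε * (g₁ ⬝ᵥ g₂)) • (g₁ + ε • g₂) := by
  rw [projSum, add_mulVec, one_sub_vecMulVec_self_mulVec, one_sub_vecMulVec_self_mulVec]
  simp only [dotProduct_add, dotProduct_smul, hg₁, hg₂, dotProduct_comm g₂ g₁, smul_eq_mul]
  ext i
  simp only [Pi.add_apply, Pi.sub_apply, Pi.smul_apply, smul_eq_mul]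
  linear_combination (g₁ ⬝ᵥ g₂ * g₂ i) * hε

theorem exists_projSum_mulVec_eq_one_sub_abs_smul (hg₁ : g₁ ⬝ᵥ g₁ = 1)
    (hg₂ : g₂ ⬝ᵥ g₂ = 1) : ∃ v ≠ 0, projSum g₁ g₂ *ᵥ v = (1 - |g₁ ⬝ᵥ g₂|) • v := by
  set c := g₁ ⬝ᵥ g₂
  obtain ⟨ε, hε, hεc⟩ : ∃ ε : ℝ, ε ^ 2 = 1 ∧ ε * c = |c| := by
    rcases abs_choice c with h | h
    · exact ⟨1, by norm_num, by rw [h, one_mul]⟩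
    · exact ⟨-1, by norm_num, by rw [h, neg_one_mul]⟩
  refine ⟨g₁ + ε • g₂, fun hv => ?_, hεc ▸ projSum_mulVec_add_smul hg₁ hg₂ hε⟩
  have hvv : (g₁ + ε • g₂) ⬝ᵥ (g₁ + ε • g₂) = 2 * (1 + |c|) := by
    simp only [dotProduct_add, add_dotProduct, dotProduct_smul, smul_dotProduct, smul_eq_mul,
      hg₁, hg₂, dotProduct_comm g₂ g₁, ← hεc, c]
    linear_combination hε
  rw [hv, zero_dotProduct] at hvv
  linarith [abs_nonneg c]

end ProjSum

theorem stmt_3_general (g₁ g₂ : Fin 3 → ℝ) (hg₁ : g₁ ⬝ᵥ g₁ = 1) (hg₂ : g₂ ⬝ᵥ g₂ = 1)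
    (θ : ℝ) (hcos : Real.cos θ = g₁ ⬝ᵥ g₂)
    (hS : ((1 - vecMulVec g₁ g₁) + (1 - vecMulVec g₂ g₂) :
      Matrix (Fin 3) (Fin 3) ℝ).IsHermitian) :
    ⨅ i, hS.eigenvalues i = 1 - |Real.cos θ| := by
  obtain ⟨v, hv, hSv⟩ := exists_projSum_mulVec_eq_one_sub_abs_smul hg₁ hg₂
  rw [hcos]
  exact hS.iInf_eigenvalues_eq (one_sub_abs_mul_le_dotProduct_projSum_mulVec hg₁ hg₂) hv hSv

/-- Let `g₁, g₂` be unit vectors in `ℝ³` with angle `θ ∈ [0, π)` between them and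
`Pᵢ = I - gᵢ gᵢᵀ`. Then the smallest eigenvalue of `P₁ + P₂` equals `1 - |cos θ|`. -/
theorem stmt_3 (g₁ g₂ : Fin 3 → ℝ) (hg₁ : g₁ ⬝ᵥ g₁ = 1) (hg₂ : g₂ ⬝ᵥ g₂ = 1)
    (θ : ℝ) (hθ : θ ∈ Set.Ico 0 π) (hcos : Real.cos θ = g₁ ⬝ᵥ g₂)
    (hS : ((1 - vecMulVec g₁ g₁) + (1 - vecMulVec g₂ g₂) :
      Matrix (Fin 3) (Fin 3) ℝ).IsHermitian) :
    ⨅ i, hS.eigenvalues i = 1 - |Real.cos θ| :=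
  stmt_3_general g₁ g₂ hg₁ hg₂ θ hcos hS
end

section
/- Let {P_j}_{j∈J} be a finite family of 3×3 orthogonal projection matrices P_j = I - g_j g_j^T with unit vectors g_j, let α_j ≥ α_0 > 0 be weights, and suppose there exist indices i, j ∈ J such that the angle θ between g_i and g_j satisfies θ_0 ≤ θ ≤ π - θ_0 for some θ_0 ∈ (0, π/2). Then the smallest eigenvalue of Σ_j α_j P_j is at least α_0 (1 - cos θ_0). -/
/-!
For a unit vector `x`, the quadratic form of `Σ_l α_l P_l` is `Σ_l α_l (1 - (g_l ⬝ x)²)`, a sum of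
nonnegative terms. Keeping only the terms `i` and `j`, it suffices that
`(g_i ⬝ x)² + (g_j ⬝ x)² ≤ 1 + |cos θ|`: this is Cauchy–Schwarz applied to `x` and
`w = (g_i ⬝ x) g_i + (g_j ⬝ x) g_j`, together with `2ab ≤ a² + b²`. Finally `|cos θ| ≤ cos θ₀`
because `θ` lies in `[θ₀, π - θ₀]`.
-/

open Matrix Real

section DotProduct

variable {n : Type*} [Fintype n]

lemma dotProduct_sq_le_mul (u v : n → ℝ) : (u ⬝ᵥ v) ^ 2 ≤ (u ⬝ᵥ u) * (v ⬝ᵥ v) := by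
  simpa [dotProduct, pow_two] using Finset.sum_mul_sq_le_sq_mul_sq Finset.univ u v

lemma sq_dotProduct_le_one {u x : n → ℝ} (hu : u ⬝ᵥ u = 1) (hx : x ⬝ᵥ x = 1) :
    (u ⬝ᵥ x) ^ 2 ≤ 1 := by
  simpa [hu, hx] using dotProduct_sq_le_mul u x

lemma sq_dotProduct_add_sq_dotProduct_le_s5 {u v x : n → ℝ} (hu : u ⬝ᵥ u = 1)
    (hv : v ⬝ᵥ v = 1) (hx : x ⬝ᵥ x = 1) :
    (u ⬝ᵥ x) ^ 2 + (v ⬝ᵥ x) ^ 2 ≤ 1 + |u ⬝ᵥ v| := by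
  set a := u ⬝ᵥ x
  set b := v ⬝ᵥ x
  set c := u ⬝ᵥ v
  set w := a • u + b • v
  have hwx : w ⬝ᵥ x = a ^ 2 + b ^ 2 := by
    simp only [w, add_dotProduct, smul_dotProduct, smul_eq_mul, a, b]
    ring
  have hww : w ⬝ᵥ w = a ^ 2 + b ^ 2 + 2 * a * b * c := by
    simp only [w, add_dotProduct, dotProduct_add, smul_dotProduct, dotProduct_smul, smul_eq_mul,
      hu, hv, dotProduct_comm v u, c]
    ring
  have hcs : (a ^ 2 + b ^ 2) ^ 2 ≤ a ^ 2 + b ^ 2 + 2 * a * b * c := by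
    simpa [hwx, hww, hx] using dotProduct_sq_le_mul w x
  have hcross : 2 * a * b * c ≤ (a ^ 2 + b ^ 2) * |c| :=
    calc 2 * a * b * c ≤ 2 * (|a| * |b|) * |c| := by
          simpa only [abs_mul, abs_two, mul_assoc] using le_abs_self (2 * a * b * c)
      _ ≤ (a ^ 2 + b ^ 2) * |c| := by
          gcongr; nlinarith [sq_nonneg (|a| - |b|), sq_abs a, sq_abs b]
  have hs0 : 0 ≤ a ^ 2 + b ^ 2 := by positivity
  rcases hs0.eq_or_lt with hs | hs
  · rw [← hs]; positivity
  · exact le_of_mul_le_mul_left (by nlinarith) hs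

variable [DecidableEq n]

lemma dotProduct_one_sub_vecMulVec_mulVec (g x : n → ℝ) :
    x ⬝ᵥ (1 - vecMulVec g g) *ᵥ x = x ⬝ᵥ x - (g ⬝ᵥ x) ^ 2 := by
  rw [sub_mulVec, one_mulVec, vecMulVec_mulVec, dotProduct_sub]
  simp [dotProduct_comm x g, pow_two]

lemma dotProduct_sum_smul_one_sub_vecMulVec_mulVec {J : Type*} [Fintype J] (α : J → ℝ)
    (g : J → n → ℝ) (x : n → ℝ) :
    x ⬝ᵥ (∑ l, α l • (1 - vecMulVec (g l) (g l))) *ᵥ x =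
      ∑ l, α l * (x ⬝ᵥ x - (g l ⬝ᵥ x) ^ 2) := by
  simp only [sum_mulVec, dotProduct_sum, smul_mulVec, dotProduct_smul, smul_eq_mul,
    dotProduct_one_sub_vecMulVec_mulVec]

lemma Matrix.IsHermitian.le_eigenvalues_of_forall_le_dotProduct_mulVec_s5 {A : Matrix n n ℝ}
    (hA : A.IsHermitian) {c : ℝ} (h : ∀ x : n → ℝ, x ⬝ᵥ x = 1 → c ≤ x ⬝ᵥ A *ᵥ x) (k : n) :
    c ≤ hA.eigenvalues k := by
  have hunit : (hA.eigenvectorBasis k).ofLp ⬝ᵥ (hA.eigenvectorBasis k).ofLp = 1 := by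
    have h := EuclideanSpace.inner_eq_star_dotProduct (hA.eigenvectorBasis k) (hA.eigenvectorBasis k)
    rw [star_trivial, real_inner_self_eq_norm_sq, hA.eigenvectorBasis.orthonormal.1 k] at h
    simpa using h.symm
  simpa [hA.eigenvalues_eq k] using h _ hunit

end DotProduct

lemma le_sum_mul_one_sub_sq_dotProduct {n J : Type*} [Fintype n] [Fintype J] {g : J → n → ℝ}
    (hg : ∀ l, g l ⬝ᵥ g l = 1) {α : J → ℝ} {α₀ : ℝ} (hα₀ : 0 ≤ α₀) (hα : ∀ l, α₀ ≤ α l)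
    (i j : J) {x : n → ℝ} (hx : x ⬝ᵥ x = 1) :
    α₀ * (1 - |g i ⬝ᵥ g j|) ≤ ∑ l, α l * (1 - (g l ⬝ᵥ x) ^ 2) := by
  have hterm : ∀ l, α₀ * (1 - (g l ⬝ᵥ x) ^ 2) ≤ α l * (1 - (g l ⬝ᵥ x) ^ 2) := fun l =>
    mul_le_mul_of_nonneg_right (hα l) (sub_nonneg.2 (sq_dotProduct_le_one (hg l) hx))
  have hnonneg : ∀ l, 0 ≤ α l * (1 - (g l ⬝ᵥ x) ^ 2) := fun l =>
    (mul_nonneg hα₀ (sub_nonneg.2 (sq_dotProduct_le_one (hg l) hx))).trans (hterm l)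
  classical
  obtain rfl | hij := eq_or_ne i j
  · simpa [hg i] using Finset.sum_nonneg fun l _ => hnonneg l
  have hpair := Finset.sum_le_sum_of_subset_of_nonneg (Finset.subset_univ {i, j})
    fun l _ _ => hnonneg l
  rw [Finset.sum_pair hij] at hpair
  have hkey := sq_dotProduct_add_sq_dotProduct_le_s5 (hg i) (hg j) hx
  nlinarith [hterm i, hterm j]

lemma abs_cos_le_cos {θ θ₀ : ℝ} (hθ₀ : 0 ≤ θ₀) (hle : θ₀ ≤ θ) (hge : θ ≤ π - θ₀) :
    |cos θ| ≤ cos θ₀ := by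
  rw [abs_le]
  constructor
  · simpa [cos_pi_sub] using cos_le_cos_of_nonneg_of_le_pi (hθ₀.trans hle) (by linarith) hge
  · exact cos_le_cos_of_nonneg_of_le_pi hθ₀ (by linarith) hle

theorem stmt_5_general {J : Type*} [Fintype J]
    (g : J → (Fin 3 → ℝ)) (hg : ∀ j, g j ⬝ᵥ g j = 1)
    (α : J → ℝ) (α₀ : ℝ) (hα₀ : 0 < α₀) (hα : ∀ j, α₀ ≤ α j)
    (i j : J) (θ θ₀ : ℝ) (hθ₀ : θ₀ ∈ Set.Ioo 0 (π / 2))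
    (hcos : Real.cos θ = g i ⬝ᵥ g j)
    (hθ : θ₀ ≤ θ ∧ θ ≤ π - θ₀)
    (hS : (∑ l, α l • (1 - vecMulVec (g l) (g l)) :
      Matrix (Fin 3) (Fin 3) ℝ).IsHermitian) :
    α₀ * (1 - Real.cos θ₀) ≤ ⨅ idx, hS.eigenvalues idx := by
  have habs_cos : |g i ⬝ᵥ g j| ≤ cos θ₀ := hcos ▸ abs_cos_le_cos hθ₀.1.le hθ.1 hθ.2
  refine le_ciInf fun k => hS.le_eigenvalues_of_forall_le_dotProduct_mulVec_s5 (fun x hx => ?_) k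
  rw [dotProduct_sum_smul_one_sub_vecMulVec_mulVec, hx]
  calc α₀ * (1 - cos θ₀) ≤ α₀ * (1 - |g i ⬝ᵥ g j|) := by gcongr
    _ ≤ _ := le_sum_mul_one_sub_sq_dotProduct hg hα₀.le hα i j hx

/-- Let `{P_j}` be a finite family of 3×3 orthogonal projection matrices
`P_j = I - g_j g_jᵀ` with unit vectors `g_j`, weights `α_j ≥ α₀ > 0`, and suppose
there are indices `i, j` such that the angle `θ` between `g_i` and `g_j`
satisfies `θ₀ ≤ θ ≤ π - θ₀` with `θ₀ ∈ (0, π/2)`. Then the smallest eigenvalue of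
`Σ_j α_j P_j` is at least `α₀ (1 - cos θ₀)`. -/
theorem stmt_5 {J : Type*} [Fintype J]
    (g : J → (Fin 3 → ℝ)) (hg : ∀ j, g j ⬝ᵥ g j = 1)
    (α : J → ℝ) (α₀ : ℝ) (hα₀ : 0 < α₀) (hα : ∀ j, α₀ ≤ α j)
    (i j : J) (θ θ₀ : ℝ) (hθ₀ : θ₀ ∈ Set.Ioo 0 (π / 2))
    (hθmem : θ ∈ Set.Ico 0 π)
    (hcos : Real.cos θ = g i ⬝ᵥ g j)
    (hθ : θ₀ ≤ θ ∧ θ ≤ π - θ₀)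
    (hS : (∑ l, α l • (1 - vecMulVec (g l) (g l)) :
      Matrix (Fin 3) (Fin 3) ℝ).IsHermitian) :
    α₀ * (1 - Real.cos θ₀) ≤ ⨅ idx, hS.eigenvalues idx :=
  stmt_5_general g hg α α₀ hα₀ hα i j θ θ₀ hθ₀ hcos hθ hS
end

section
/- Let F_t = [[1, (t-k)Δt], [(t-k)Δt, (t-k)²Δt²]] for integers t ≤ k. Then each F_t is symmetric positive semi-definite, and for positive weights λ_t with λ_k ≥ λ_{k-1}, the smallest eigenvalue of Σ_{t=1}^{k} λ_t F_t is at least λ_{k-1} · (2 + Δt² - √(4 + Δt⁴))/2. -/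
/-!
Every eigenvalue of a Hermitian matrix is the Rayleigh quotient of a unit eigenvector, so it
suffices to bound the quadratic form `v ↦ ∑ λ_t (v₀ + (t - k) Δt v₁)²` from below on the unit
circle. All terms are nonnegative, so keeping only `t = k - 1` and `t = k` and using
`λ_k ≥ λ_{k-1}` leaves `λ_{k-1} ((v₀ - Δt v₁)² + v₀²)`, whose matrix `[[2, -Δt], [-Δt, Δt²]]`
has smallest eigenvalue `(2 + Δt² - √(4 + Δt⁴)) / 2`.
-/

open Matrix

theorem Matrix.IsHermitian.le_eigenvalues_of_forall_le {𝕜 n : Type*} [RCLike 𝕜] [Fintype n]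
    [DecidableEq n] {A : Matrix n n 𝕜} (hA : A.IsHermitian) {c : ℝ}
    (h : ∀ v : n → 𝕜, c * RCLike.re (star v ⬝ᵥ v) ≤ RCLike.re (star v ⬝ᵥ A *ᵥ v)) (i : n) :
    c ≤ hA.eigenvalues i := by
  have hnorm : RCLike.re (star ⇑(hA.eigenvectorBasis i) ⬝ᵥ ⇑(hA.eigenvectorBasis i)) = 1 := by
    rw [dotProduct_comm, ← EuclideanSpace.inner_eq_star_dotProduct, inner_self_eq_norm_sq,
      hA.eigenvectorBasis.orthonormal.1 i, one_pow]
  simpa [hnorm, hA.eigenvalues_eq i] using h (hA.eigenvectorBasis i)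

theorem Matrix.dotProduct_vecMulVec_self_mulVec {n R : Type*} [Fintype n] [CommRing R]
    (w v : n → R) : v ⬝ᵥ vecMulVec w w *ᵥ v = (w ⬝ᵥ v) ^ 2 := by
  rw [vecMulVec_mulVec]
  simp [dotProduct_comm v w, sq]

-- Multiplying by `2 - d² + √(4 + d⁴) > 0` turns the difference of the two sides into a square.
theorem mul_sq_add_sq_le (d x y : ℝ) :
    (2 + d ^ 2 - √(4 + d ^ 4)) / 2 * (x ^ 2 + y ^ 2) ≤ (x - d * y) ^ 2 + x ^ 2 := by
  set s := √(4 + d ^ 4)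
  have hs : s ^ 2 = 4 + d ^ 4 := Real.sq_sqrt (by positivity)
  have hp : 0 < 2 - d ^ 2 + s := by nlinarith [Real.sqrt_nonneg (4 + d ^ 4), sq_nonneg d]
  have hsq : (2 - d ^ 2 + s) * (2 * ((x - d * y) ^ 2 + x ^ 2) - (2 + d ^ 2 - s) * (x ^ 2 + y ^ 2))
      = ((2 - d ^ 2 + s) * x - 2 * d * y) ^ 2 := by
    linear_combination y ^ 2 * hs
  have := nonneg_of_mul_nonneg_right (hsq ▸ sq_nonneg _) hp
  linarith

theorem stmt_12_general (k : ℕ) (hk : 2 ≤ k) (Δt : ℝ)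
    (lam : ℕ → ℝ)
    (hpos : ∀ t, 1 ≤ t → t ≤ k → 0 < lam t)
    (hmono : ∀ t, 2 ≤ t → t ≤ k → lam (t - 1) ≤ lam t)
    (F : ℕ → Matrix (Fin 2) (Fin 2) ℝ)
    (hF : ∀ t, F t =
      vecMulVec ![1, ((t : ℝ) - (k : ℝ)) * Δt] ![1, ((t : ℝ) - (k : ℝ)) * Δt])
    (hS : (∑ t ∈ Finset.Icc 1 k, lam t • F t).IsHermitian) :
    (∀ t, (F t).PosSemidef) ∧
      lam (k - 1) * ((2 + Δt ^ 2 - Real.sqrt (4 + Δt ^ 4)) / 2) ≤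
        ⨅ i, hS.eigenvalues i := by
  refine ⟨fun t => by simpa [hF t] using posSemidef_vecMulVec_self_star ![1, ((t : ℝ) - k) * Δt],
    le_ciInf (hS.le_eigenvalues_of_forall_le fun v => ?_)⟩
  set q : ℕ → ℝ := fun t => lam t * (v 0 + ((t : ℝ) - k) * Δt * v 1) ^ 2
  have hq : v ⬝ᵥ (∑ t ∈ Finset.Icc 1 k, lam t • F t) *ᵥ v = ∑ t ∈ Finset.Icc 1 k, q t := by
    rw [sum_mulVec, dotProduct_sum]
    refine Finset.sum_congr rfl fun t _ => ?_
    rw [hF, smul_mulVec, dotProduct_smul, dotProduct_vecMulVec_self_mulVec]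
    simp [q, dotProduct, Fin.sum_univ_two]
  have hcast : ((k - 1 : ℕ) : ℝ) - k = -1 := by rw [Nat.cast_sub (by omega)]; ring
  have hl : 0 < lam (k - 1) := hpos (k - 1) (by omega) (by omega)
  have hq_nonneg : ∀ t ∈ Finset.Icc 1 k, 0 ≤ q t := fun t ht =>
    mul_nonneg (hpos t (Finset.mem_Icc.1 ht).1 (Finset.mem_Icc.1 ht).2).le (sq_nonneg _)
  simp only [star_trivial, RCLike.re_to_real, hq]
  calc lam (k - 1) * ((2 + Δt ^ 2 - √(4 + Δt ^ 4)) / 2) * (v ⬝ᵥ v)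
      = lam (k - 1) * ((2 + Δt ^ 2 - √(4 + Δt ^ 4)) / 2 * (v 0 ^ 2 + v 1 ^ 2)) := by
        simp [dotProduct, Fin.sum_univ_two]; ring
    _ ≤ lam (k - 1) * ((v 0 - Δt * v 1) ^ 2 + v 0 ^ 2) :=
        mul_le_mul_of_nonneg_left (mul_sq_add_sq_le Δt (v 0) (v 1)) hl.le
    _ ≤ q (k - 1) + q k := by
        simp only [q, hcast, sub_self]
        nlinarith [hmono k hk le_rfl, sq_nonneg (v 0)]
    _ ≤ ∑ t ∈ Finset.Icc 1 k, q t :=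
        Finset.add_le_sum hq_nonneg (Finset.mem_Icc.2 ⟨by omega, by omega⟩)
          (Finset.mem_Icc.2 ⟨by omega, le_rfl⟩) (by omega)

/-- Let `F_t = [[1, (t-k)Δt], [(t-k)Δt, (t-k)²Δt²]]` for `t = 1, …, k`. Then each
`F_t` is symmetric positive semi-definite, and for positive weights `λ_t` which are
nondecreasing in `t`, the smallest eigenvalue of `Σ_{t=1}^{k} λ_t F_t` is at least
`λ_{k-1} · (2 + Δt² - √(4 + Δt⁴))/2`. -/
theorem stmt_12 (k : ℕ) (hk : 2 ≤ k) (Δt : ℝ) (hΔt : 0 < Δt)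
    (lam : ℕ → ℝ)
    (hpos : ∀ t, 1 ≤ t → t ≤ k → 0 < lam t)
    (hmono : ∀ t, 2 ≤ t → t ≤ k → lam (t - 1) ≤ lam t)
    (F : ℕ → Matrix (Fin 2) (Fin 2) ℝ)
    (hF : ∀ t, F t =
      vecMulVec ![1, ((t : ℝ) - (k : ℝ)) * Δt] ![1, ((t : ℝ) - (k : ℝ)) * Δt])
    (hS : (∑ t ∈ Finset.Icc 1 k, lam t • F t).IsHermitian) :
    (∀ t, (F t).PosSemidef) ∧
      lam (k - 1) * ((2 + Δt ^ 2 - Real.sqrt (4 + Δt ^ 4)) / 2) ≤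
        ⨅ i, hS.eigenvalues i :=
  stmt_12_general k hk Δt lam hpos hmono F hF hS
end
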